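/- For every integer d > 2, E_DS[2,d] = (√2/√π) · Γ(d/2) / Γ(d/2 + 1/2); equivalently, the integral of max(|x_1|, |x_2|) over the unit sphere S^{d-1} with respect to the uniform probability measure equals √2 · Γ(d/2)/(√π · Γ(d/2 + 1/2)). -/

import Mathlib

open MeasureTheory Real Set Metric

variable {d : ℕ}

local notation "E" => EuclideanSpace ℝ (Fin d)

lemma max_abs_half (u v : ℝ) : max |u| |v| = (|u - v| + |u + v|) / 2 := by
  rcases abs_cases (u-v) with ⟨h1,h1'⟩ | ⟨h1,h1'⟩ <;>
  rcases abs_cases (u+v) with ⟨h2,h2'⟩ | ⟨h2,h2'⟩ <;>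
  rcases abs_cases u with ⟨hu,hu'⟩|⟨hu,hu'⟩ <;>
  rcases abs_cases v with ⟨hv,hv'⟩|⟨hv,hv'⟩ <;>
  rw [h1, h2, hu, hv, max_def] <;> split_ifs <;> linarith

lemma coord_cont (i : Fin d) : Continuous fun x : E => x i :=
  (continuous_apply i).comp (PiLp.continuous_ofLp 2 _)

lemma coord_le_norm (x : E) (i : Fin d) : |x i| ≤ ‖x‖ := by
  rw [EuclideanSpace.norm_eq, ← Real.sqrt_sq_eq_abs]
  refine Real.sqrt_le_sqrt ?_
  calc x i ^ 2 = ‖x i‖ ^ 2 := by rw [Real.norm_eq_abs, sq_abs]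
  _ ≤ _ := Finset.single_le_sum (f := fun j => ‖x j‖ ^ 2) (fun j _ => by positivity)
      (Finset.mem_univ i)

lemma smul_coord (r : ℝ) (x : E) (i : Fin d) : (r • x) i = r * x i := rfl

lemma integrable_weight (q : E → ℝ) (hc : Continuous q) (hb : ∀ x, |q x| ≤ 2 * ‖x‖) :
    Integrable fun x : E => q x * rexp (-‖x‖ ^ 2) := by
  have hint : Integrable fun x : E => 2 * rexp (-(1/2) * ‖x‖ ^ 2) := by
    have := (GaussianFourier.integrable_cexp_neg_mul_sq_norm_add_of_euclideanSpace
      (ι := Fin d) (b := 1/2) (by norm_num) 0 0).norm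
    refine (this.const_mul 2).congr ?_
    filter_upwards with x
    simp only [zero_mul, add_zero, Complex.norm_exp]
    norm_num
    norm_cast
  refine hint.mono' ((hc.mul (Real.continuous_exp.comp (by fun_prop))).aestronglyMeasurable) ?_
  filter_upwards with x
  have h1 : ‖x‖ ≤ rexp ((1/2) * ‖x‖ ^ 2) := by
    have := Real.add_one_le_exp ((1/2) * ‖x‖ ^ 2)
    nlinarith [norm_nonneg x, sq_nonneg (‖x‖ - 1)]
  have h2 : |q x| * rexp (-‖x‖ ^ 2) ≤ 2 * (rexp ((1/2) * ‖x‖^2) * rexp (-‖x‖ ^ 2)) := by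
    have := hb x
    nlinarith [Real.exp_pos (-‖x‖^2), Real.exp_pos ((1/2) * ‖x‖^2), norm_nonneg x]
  rw [Real.norm_eq_abs, abs_mul, abs_of_nonneg (Real.exp_pos _).le]
  refine h2.trans (le_of_eq ?_)
  rw [← Real.exp_add]
  ring_nf

lemma int_pow_exp (n : ℕ) :
    ∫ y in Ioi (0:ℝ), y ^ n * rexp (-y ^ 2) = (1/2) * Real.Gamma ((n + 1) / 2) := by
  rw [← integral_rpow_mul_exp_neg_rpow (p := 2) (q := n) (by norm_num)
    (lt_of_lt_of_le neg_one_lt_zero (Nat.cast_nonneg n))]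
  refine setIntegral_congr_fun measurableSet_Ioi fun y hy => ?_
  rw [← Real.rpow_natCast y n, ← Real.rpow_two]

lemma int_abs_exp : ∫ t : ℝ, |t| * rexp (-t ^ 2) = 1 := by
  calc ∫ t : ℝ, |t| * rexp (-t ^ 2) = ∫ t : ℝ, (fun u => u * rexp (-u ^ 2)) |t| := by
        simp only [sq_abs]
    _ = 2 * ∫ u in Ioi (0:ℝ), u * rexp (-u ^ 2) := integral_comp_abs (f := fun u => u * rexp (-u ^ 2))
    _ = 2 * ∫ u in Ioi (0:ℝ), u ^ 1 * rexp (-u ^ 2) := by simp only [pow_one]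
    _ = 1 := by rw [int_pow_exp 1]; norm_num [Real.Gamma_one]

lemma int_exp_sq : ∫ t : ℝ, rexp (-t ^ 2) = Real.sqrt π := by
  simpa using integral_gaussian 1

lemma coord_integral (hd : 0 < d) (i : Fin d) :
    ∫ x : E, |x i| * rexp (-‖x‖ ^ 2) = Real.sqrt π ^ (d - 1) := by
  have mp := (EuclideanSpace.volume_preserving_symm_measurableEquiv_toLp (Fin d)).symm
  rw [← mp.integral_comp' (fun x : E => |x i| * rexp (-‖x‖ ^ 2))]
  have key : ∀ y : Fin d → ℝ,
      |((MeasurableEquiv.toLp 2 (Fin d → ℝ)).symm.symm y : E) i| *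
        rexp (-‖((MeasurableEquiv.toLp 2 (Fin d → ℝ)).symm.symm y : E)‖ ^ 2)
      = ∏ j, (fun t => (if j = i then |t| else 1) * rexp (-t ^ 2)) (y j) := by
    intro y
    have hcoord : ∀ j, ((MeasurableEquiv.toLp 2 (Fin d → ℝ)).symm.symm y : E) j = y j :=
      fun j => rfl
    have hnorm : ‖((MeasurableEquiv.toLp 2 (Fin d → ℝ)).symm.symm y : E)‖ ^ 2 = ∑ j, (y j) ^ 2 := by
      rw [EuclideanSpace.norm_eq]
      rw [Real.sq_sqrt (by positivity)]
      refine Finset.sum_congr rfl fun j _ => by rw [hcoord, Real.norm_eq_abs, sq_abs]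
    rw [hcoord, hnorm, Finset.prod_mul_distrib, Finset.prod_ite_eq' Finset.univ i (fun j => |y j|)]
    simp only [Finset.mem_univ, if_true]
    rw [← Real.exp_sum]
    congr 1
    rw [← Finset.sum_neg_distrib]
  rw [funext key]
  calc (∫ y : Fin d → ℝ, ∏ j, (fun t => (if j = i then |t| else 1) * rexp (-t ^ 2)) (y j))
      = ∏ j, ∫ t : ℝ, (if j = i then |t| else 1) * rexp (-t ^ 2) :=
        MeasureTheory.integral_fintype_prod_eq_prod
          (fun j t => (if j = i then |t| else 1) * rexp (-t ^ 2))
    _ = ∏ j, (if j = i then (1:ℝ) else Real.sqrt π) := by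
        refine Finset.prod_congr rfl fun j _ => ?_
        by_cases h : j = i
        · simp only [if_pos h]; exact int_abs_exp
        · simp only [if_neg h, one_mul]; exact int_exp_sq
    _ = Real.sqrt π ^ (d - 1) := by
        rw [← Finset.mul_prod_erase Finset.univ _ (Finset.mem_univ i), if_pos rfl, one_mul]
        rw [Finset.prod_congr rfl (fun j hj => if_neg (Finset.mem_erase.mp hj).1),
          Finset.prod_const, Finset.card_erase_of_mem (Finset.mem_univ i), Finset.card_univ,
          Fintype.card_fin]

lemma sum_split {M : Type*} [AddCommMonoid M] {i₀ i₁ : Fin d} (hne : i₀ ≠ i₁) (f : Fin d → M) :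
    ∑ j, f j = f i₀ + (f i₁ + ∑ j ∈ (Finset.univ.erase i₀).erase i₁, f j) := by
  rw [← Finset.add_sum_erase _ f (Finset.mem_univ i₀),
    ← Finset.add_sum_erase _ f (Finset.mem_erase.mpr ⟨hne.symm, Finset.mem_univ i₁⟩)]

noncomputable def rotL (i₀ i₁ : Fin d) : E →ₗ[ℝ] E where
  toFun x := (WithLp.equiv 2 (Fin d → ℝ)).symm fun i =>
    if i = i₀ then (x i₀ + x i₁) / Real.sqrt 2
    else if i = i₁ then (x i₀ - x i₁) / Real.sqrt 2 else x i
  map_add' x y := by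
    ext i
    simp only [WithLp.equiv_symm_apply, WithLp.ofLp_toLp, PiLp.add_apply]
    split_ifs <;> ring
  map_smul' c x := by
    ext i
    simp only [WithLp.equiv_symm_apply, WithLp.ofLp_toLp, PiLp.smul_apply, smul_eq_mul, RingHom.id_apply]
    split_ifs <;> ring

lemma rotL_apply₀ (i₀ i₁ : Fin d) (x : E) : rotL i₀ i₁ x i₀ = (x i₀ + x i₁) / Real.sqrt 2 := by
  simp [rotL]

lemma rotL_apply₁ {i₀ i₁ : Fin d} (hne : i₀ ≠ i₁) (x : E) :
    rotL i₀ i₁ x i₁ = (x i₀ - x i₁) / Real.sqrt 2 := by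
  simp [rotL, if_neg hne.symm]

lemma rotL_apply_other {i₀ i₁ j : Fin d} (h0 : j ≠ i₀) (h1 : j ≠ i₁) (x : E) :
    rotL i₀ i₁ x j = x j := by
  simp [rotL, if_neg h0, if_neg h1]

lemma rotL_invol {i₀ i₁ : Fin d} (hne : i₀ ≠ i₁) : Function.Involutive (rotL i₀ i₁) := by
  intro x
  have h2 : Real.sqrt 2 ≠ 0 := by positivity
  have hmul : Real.sqrt 2 * Real.sqrt 2 = 2 := Real.mul_self_sqrt (by norm_num)
  ext i
  rcases eq_or_ne i i₀ with rfl | h0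
  · rw [rotL_apply₀, rotL_apply₀, rotL_apply₁ hne]
    field_simp
    rw [Real.sq_sqrt (by norm_num)]; ring
  rcases eq_or_ne i i₁ with rfl | h1
  · rw [rotL_apply₁ hne, rotL_apply₀, rotL_apply₁ hne]
    field_simp
    rw [Real.sq_sqrt (by norm_num)]; ring
  · rw [rotL_apply_other h0 h1, rotL_apply_other h0 h1]

lemma rotL_norm {i₀ i₁ : Fin d} (hne : i₀ ≠ i₁) (x : E) : ‖rotL i₀ i₁ x‖ = ‖x‖ := by
  have h2 : (Real.sqrt 2) ^ 2 = 2 := Real.sq_sqrt (by norm_num)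
  rw [EuclideanSpace.norm_eq, EuclideanSpace.norm_eq]
  congr 1
  rw [sum_split hne (fun j => ‖rotL i₀ i₁ x j‖ ^ 2), sum_split hne (fun j => ‖x j‖ ^ 2)]
  have htail : ∑ j ∈ (Finset.univ.erase i₀).erase i₁, ‖rotL i₀ i₁ x j‖ ^ 2
      = ∑ j ∈ (Finset.univ.erase i₀).erase i₁, ‖x j‖ ^ 2 := by
    refine Finset.sum_congr rfl fun j hj => ?_
    rw [rotL_apply_other (Finset.mem_erase.mp (Finset.mem_of_mem_erase hj)).1
      (Finset.mem_erase.mp hj).1]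
  rw [htail, rotL_apply₀, rotL_apply₁ hne]
  have hmain : ‖(x i₀ + x i₁) / Real.sqrt 2‖ ^ 2 + ‖(x i₀ - x i₁) / Real.sqrt 2‖ ^ 2
      = ‖x i₀‖ ^ 2 + ‖x i₁‖ ^ 2 := by
    simp only [Real.norm_eq_abs, sq_abs, div_pow, h2]
    ring
  rw [← add_assoc, ← add_assoc, hmain]

noncomputable def rotIso {i₀ i₁ : Fin d} (hne : i₀ ≠ i₁) : E ≃ₗᵢ[ℝ] E :=
  { LinearEquiv.ofInvolutive (rotL i₀ i₁) (rotL_invol hne) with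
    norm_map' := rotL_norm hne }

lemma rotIso_coe {i₀ i₁ : Fin d} (hne : i₀ ≠ i₁) (x : E) : rotIso hne x = rotL i₀ i₁ x := rfl

lemma rot_integral {i₀ i₁ : Fin d} (hne : i₀ ≠ i₁) (F : E → ℝ) :
    ∫ x : E, F (rotIso hne x) = ∫ x : E, F x :=
  (rotIso hne).measurePreserving.integral_comp
    (rotIso hne).toHomeomorph.measurableEmbedding F

lemma polar_integral (hd : 0 < d) (q : E → ℝ)
    (hq : ∀ (r : ℝ), 0 ≤ r → ∀ x : E, q (r • x) = r * q x) :
    ∫ x : E, q x * rexp (-‖x‖ ^ 2)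
      = (∫ u : sphere (0 : E) 1, q u ∂((volume : Measure E).toSphere))
          * ((1/2) * Real.Gamma ((d + 1) / 2)) := by
  haveI : Nontrivial E := by
    refine ⟨EuclideanSpace.single ⟨0, hd⟩ 1, 0, fun h => ?_⟩
    have := congrArg (fun v : E => v ⟨0, hd⟩) h
    simp [EuclideanSpace.single_apply] at this
  have hfr : Module.finrank ℝ (EuclideanSpace ℝ (Fin d)) = d := finrank_euclideanSpace_fin
  set μ : Measure E := volume with hμ
  have step1 : ∫ x : E, q x * rexp (-‖x‖ ^ 2)
      = ∫ z : ({0}ᶜ : Set E), q z * rexp (-‖(z : E)‖ ^ 2) ∂(μ.comap Subtype.val) := by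
    rw [integral_subtype_comap (measurableSet_singleton (0:E)).compl
      (fun x : E => q x * rexp (-‖x‖ ^ 2)), MeasureTheory.restrict_compl_singleton (0 : E)]
  have step2 : ∫ z : ({0}ᶜ : Set E), q z * rexp (-‖(z : E)‖ ^ 2) ∂(μ.comap Subtype.val)
      = ∫ p : sphere (0 : E) 1 × Set.Ioi (0:ℝ),
          q p.1 * ((p.2 : ℝ) * rexp (-(p.2 : ℝ) ^ 2))
          ∂(μ.toSphere.prod (.volumeIoiPow (Module.finrank ℝ E - 1))) := by
    rw [← μ.measurePreserving_homeomorphUnitSphereProd.integral_comp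
      (Homeomorph.measurableEmbedding _)
      (fun p : sphere (0 : E) 1 × Set.Ioi (0:ℝ) => q p.1 * ((p.2 : ℝ) * rexp (-(p.2 : ℝ) ^ 2)))]
    refine integral_congr_ae (Filter.Eventually.of_forall fun z => ?_)
    have hz : (z : E) ≠ 0 := z.2
    have hnorm : ‖(z : E)‖ ≠ 0 := norm_ne_zero_iff.mpr hz
    simp only [homeomorphUnitSphereProd_apply_fst_coe, homeomorphUnitSphereProd_apply_snd_coe]
    rw [hq ‖(z : E)‖⁻¹ (by positivity) z]
    field_simp
  have step3 : ∫ p : sphere (0 : E) 1 × Set.Ioi (0:ℝ),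
          q p.1 * ((p.2 : ℝ) * rexp (-(p.2 : ℝ) ^ 2))
          ∂(μ.toSphere.prod (.volumeIoiPow (Module.finrank ℝ E - 1)))
      = (∫ u : sphere (0 : E) 1, q u ∂μ.toSphere)
          * ∫ r : Set.Ioi (0:ℝ), ((r : ℝ) * rexp (-(r : ℝ) ^ 2))
              ∂(Measure.volumeIoiPow (Module.finrank ℝ E - 1)) :=
    integral_prod_mul (fun u : sphere (0 : E) 1 => q u)
      (fun r : Set.Ioi (0:ℝ) => (r : ℝ) * rexp (-(r : ℝ) ^ 2))
  have step4 : ∫ r : Set.Ioi (0:ℝ), ((r : ℝ) * rexp (-(r : ℝ) ^ 2))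
        ∂(Measure.volumeIoiPow (Module.finrank ℝ E - 1))
      = (1/2) * Real.Gamma ((d + 1) / 2) := by
    simp only [Measure.volumeIoiPow, ENNReal.ofReal]
    rw [integral_withDensity_eq_integral_smul
      ((measurable_subtype_coe.pow_const _).real_toNNReal),
      integral_subtype_comap measurableSet_Ioi
        (fun a : ℝ => Real.toNNReal (a ^ (Module.finrank ℝ E - 1)) • (a * rexp (-a ^ 2)))]
    rw [setIntegral_congr_fun measurableSet_Ioi
      (g := fun y : ℝ => y ^ d * rexp (-y ^ 2)) (fun y hy => ?_), int_pow_exp d]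
    rw [NNReal.smul_def, Real.coe_toNNReal _ (pow_nonneg (le_of_lt hy) _), smul_eq_mul, hfr,
      ← mul_assoc, ← pow_succ, Nat.sub_add_cancel hd]
  rw [step1, step2, step3, step4]

noncomputable def sphereUniform (d : ℕ) :
    Measure (Metric.sphere (0 : EuclideanSpace ℝ (Fin d)) 1) :=
  ((volume : Measure (EuclideanSpace ℝ (Fin d))).toSphere Set.univ)⁻¹ •
    (volume : Measure (EuclideanSpace ℝ (Fin d))).toSphere

/-- `E_DS[p,d] = ∫_{S^{d-1}} max_{1 ≤ i ≤ p} |x_i| dσ_d(x)`. -/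
noncomputable def E_DS (p d : ℕ) : ℝ :=
  ∫ x : Metric.sphere (0 : EuclideanSpace ℝ (Fin d)) 1,
    (⨆ (i : Fin d) (_ : (i : ℕ) < p), |(x : EuclideanSpace ℝ (Fin d)) i|)
    ∂(sphereUniform d)

lemma isup_eq (hd : 2 < d) (x : E) :
    (⨆ (i : Fin d) (_ : (i : ℕ) < 2), |x i|)
      = max |x ⟨0, Nat.zero_lt_of_lt hd⟩| |x ⟨1, Nat.lt_of_succ_lt hd⟩| := by
  haveI : Nonempty (Fin d) := ⟨⟨0, by omega⟩⟩
  have bdd : BddAbove (Set.range fun i : Fin d => ⨆ _ : (i : ℕ) < 2, |x i|) :=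
    Set.Finite.bddAbove (Set.finite_range _)
  apply le_antisymm
  · refine ciSup_le fun i => ?_
    by_cases h : (i : ℕ) < 2
    · rw [ciSup_pos h]
      have hv : (i : ℕ) = 0 ∨ (i : ℕ) = 1 := by omega
      have : i = ⟨0, by omega⟩ ∨ i = ⟨1, by omega⟩ := by
        rcases hv with h' | h'
        · exact Or.inl (Fin.ext h')
        · exact Or.inr (Fin.ext h')
      rcases this with h2 | h2 <;> rw [h2]
      · exact le_max_left _ _
      · exact le_max_right _ _
    · haveI : IsEmpty ((i : ℕ) < 2 : Prop) := ⟨h⟩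
      rw [Real.iSup_of_isEmpty]
      positivity
  · refine max_le (le_ciSup_of_le bdd ⟨0, by omega⟩ ?_) (le_ciSup_of_le bdd ⟨1, by omega⟩ ?_)
    · exact le_ciSup (f := fun _ => |x ⟨0, by omega⟩|)
        (Set.Finite.bddAbove (Set.finite_range _)) (by norm_num)
    · exact le_ciSup (f := fun _ => |x ⟨1, by omega⟩|)
        (Set.Finite.bddAbove (Set.finite_range _)) (by norm_num)

lemma main_claim (hd : 2 < d) (h0 : 0 < d) (h1 : 1 < d) :
    (∫ x : sphere (0 : E) 1, max |(x : E) ⟨0, h0⟩| |(x : E) ⟨1, h1⟩|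
        ∂(sphereUniform d))
      = Real.sqrt 2 * Real.Gamma ((d : ℝ) / 2) /
          (Real.sqrt π * Real.Gamma ((d : ℝ) / 2 + 1 / 2)) := by
  have hd0 : 0 < d := by omega
  haveI : NeZero d := ⟨hd0.ne'⟩
  set i₀ : Fin d := ⟨0, h0⟩ with hi₀
  set i₁ : Fin d := ⟨1, h1⟩ with hi₁
  have hne : i₀ ≠ i₁ := by simp [hi₀, hi₁, Fin.ext_iff]
  have hfr : Module.finrank ℝ (EuclideanSpace ℝ (Fin d)) = d := finrank_euclideanSpace_fin
  have hmul : Real.sqrt 2 * Real.sqrt 2 = 2 := Real.mul_self_sqrt (by norm_num)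
  have hs2 : Real.sqrt 2 ≠ 0 := by positivity
  -- homogeneity of the max function
  have hhom : ∀ (r : ℝ), 0 ≤ r → ∀ y : E, max |(r • y) i₀| |(r • y) i₁| = r * max |y i₀| |y i₁| := by
    intro r hr y
    rw [smul_coord, smul_coord, abs_mul, abs_mul, abs_of_nonneg hr]
    exact (mul_max_of_nonneg _ _ hr).symm
  have hpolar := polar_integral hd0 (fun y : E => max |y i₀| |y i₁|) hhom
  -- integrability of the two pieces
  have hia : Integrable fun x : E => |x i₀ - x i₁| * rexp (-‖x‖ ^ 2) := by
    refine integrable_weight _ (by fun_prop) fun x => ?_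
    rw [abs_abs]
    calc |x i₀ - x i₁| ≤ |x i₀| + |x i₁| := by
          rw [sub_eq_add_neg]; exact (abs_add_le _ _).trans (by rw [abs_neg])
      _ ≤ 2 * ‖x‖ := by have := coord_le_norm x i₀; have := coord_le_norm x i₁; linarith
  have hib : Integrable fun x : E => |x i₀ + x i₁| * rexp (-‖x‖ ^ 2) := by
    refine integrable_weight _ (by fun_prop) fun x => ?_
    rw [abs_abs]
    calc |x i₀ + x i₁| ≤ |x i₀| + |x i₁| := abs_add_le _ _
      _ ≤ 2 * ‖x‖ := by have := coord_le_norm x i₀; have := coord_le_norm x i₁; linarith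
  -- rotated integrals
  have hA : ∫ x : E, |x i₀ - x i₁| * rexp (-‖x‖ ^ 2)
      = Real.sqrt 2 * Real.sqrt π ^ (d - 1) := by
    have hr := rot_integral hne (fun y : E => Real.sqrt 2 * (|y i₁| * rexp (-‖y‖ ^ 2)))
    have hpt : ∀ x : E, Real.sqrt 2 * (|rotIso hne x i₁| * rexp (-‖rotIso hne x‖ ^ 2))
        = |x i₀ - x i₁| * rexp (-‖x‖ ^ 2) := by
      intro x
      rw [rotIso_coe, rotL_apply₁ hne, (rotL_norm hne x : ‖rotL i₀ i₁ x‖ = ‖x‖),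
        abs_div, abs_of_nonneg (Real.sqrt_nonneg 2)]
      field_simp
    rw [← funext hpt] at *
    rw [hr, integral_const_mul, coord_integral hd0 i₁]
  have hB : ∫ x : E, |x i₀ + x i₁| * rexp (-‖x‖ ^ 2)
      = Real.sqrt 2 * Real.sqrt π ^ (d - 1) := by
    have hr := rot_integral hne (fun y : E => Real.sqrt 2 * (|y i₀| * rexp (-‖y‖ ^ 2)))
    have hpt : ∀ x : E, Real.sqrt 2 * (|rotIso hne x i₀| * rexp (-‖rotIso hne x‖ ^ 2))
        = |x i₀ + x i₁| * rexp (-‖x‖ ^ 2) := by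
      intro x
      rw [rotIso_coe, rotL_apply₀, (rotL_norm hne x : ‖rotL i₀ i₁ x‖ = ‖x‖),
        abs_div, abs_of_nonneg (Real.sqrt_nonneg 2)]
      field_simp
    rw [← funext hpt] at *
    rw [hr, integral_const_mul, coord_integral hd0 i₀]
  -- Gaussian integral of the max function
  have hM : ∫ x : E, max |x i₀| |x i₁| * rexp (-‖x‖ ^ 2)
      = Real.sqrt 2 * Real.sqrt π ^ (d - 1) := by
    have hsplit : ∀ x : E, max |x i₀| |x i₁| * rexp (-‖x‖ ^ 2)
        = (|x i₀ - x i₁| * rexp (-‖x‖ ^ 2)) / 2 + (|x i₀ + x i₁| * rexp (-‖x‖ ^ 2)) / 2 := by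
      intro x
      rw [max_abs_half]
      ring
    simp only [hsplit]
    rw [integral_add (hia.div_const 2) (hib.div_const 2), integral_div, integral_div, hA, hB]
    ring
  -- value of the unnormalized sphere integral
  have hG1 : 0 < Real.Gamma ((d : ℝ) / 2 + 1) := Real.Gamma_pos_of_pos (by positivity)
  have hG2 : 0 < Real.Gamma ((d : ℝ) / 2) := Real.Gamma_pos_of_pos (by positivity)
  have hG3 : 0 < Real.Gamma ((d : ℝ) / 2 + 1 / 2) := Real.Gamma_pos_of_pos (by positivity)
  have hK : (0:ℝ) < 1 / 2 * Real.Gamma (((d : ℝ) + 1) / 2) := by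
    have := Real.Gamma_pos_of_pos (show (0:ℝ) < ((d : ℝ) + 1) / 2 by positivity)
    linarith
  have hSK : (∫ u : sphere (0 : E) 1, max |(u : E) i₀| |(u : E) i₁|
        ∂(volume : Measure (EuclideanSpace ℝ (Fin d))).toSphere)
        * (1 / 2 * Real.Gamma (((d : ℝ) + 1) / 2))
      = Real.sqrt 2 * Real.sqrt π ^ (d - 1) := by
    rw [← hpolar]
    exact hM
  have hS := eq_div_of_mul_eq hK.ne' hSK
  -- total measure of the sphere
  have hV : ((volume : Measure (EuclideanSpace ℝ (Fin d))).toSphere Set.univ)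
      = ENNReal.ofReal ((d : ℝ) * (Real.sqrt π ^ d / Real.Gamma ((d : ℝ) / 2 + 1))) := by
    rw [Measure.toSphere_apply_univ, EuclideanSpace.volume_ball]
    simp only [Fintype.card_fin, ENNReal.ofReal_one, one_pow, one_mul, hfr]
    rw [ENNReal.ofReal_mul (Nat.cast_nonneg d), ENNReal.ofReal_natCast]
  rw [sphereUniform, integral_smul_measure, hS, hV, ENNReal.toReal_inv,
    ENNReal.toReal_ofReal (by positivity), smul_eq_mul]
  have hgam : Real.Gamma ((d : ℝ) / 2 + 1) = ((d : ℝ) / 2) * Real.Gamma ((d : ℝ) / 2) :=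
    Real.Gamma_add_one (by positivity)
  have harg : ((d : ℝ) + 1) / 2 = (d : ℝ) / 2 + 1 / 2 := by ring
  have hpow : Real.sqrt π ^ d = Real.sqrt π ^ (d - 1) * Real.sqrt π := by
    rw [← pow_succ, Nat.sub_add_cancel hd0]
  have hsp : (0:ℝ) < Real.sqrt π := Real.sqrt_pos.mpr Real.pi_pos
  have hspp : (0:ℝ) < Real.sqrt π ^ (d - 1) := by positivity
  have hdp : (0:ℝ) < (d : ℝ) := by exact_mod_cast hd0
  rw [harg, hgam, hpow]
  field_simp

/-- For every integer `d > 2`,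
`E_DS[2,d] = (√2/√π) Γ(d/2)/Γ(d/2+1/2)`; equivalently, the integral of `max(|x_1|,|x_2|)`
over the unit sphere with respect to the uniform probability measure equals
`√2 Γ(d/2)/(√π Γ(d/2+1/2))`. -/
theorem E_DS_two (d : ℕ) (hd : 2 < d) :
    E_DS 2 d = (Real.sqrt 2 / Real.sqrt π) *
        (Real.Gamma ((d : ℝ) / 2) / Real.Gamma ((d : ℝ) / 2 + 1 / 2)) ∧
    ∫ x : Metric.sphere (0 : EuclideanSpace ℝ (Fin d)) 1,
        max |(x : EuclideanSpace ℝ (Fin d)) ⟨0, by omega⟩|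
          |(x : EuclideanSpace ℝ (Fin d)) ⟨1, by omega⟩| ∂(sphereUniform d)
      = Real.sqrt 2 * Real.Gamma ((d : ℝ) / 2) /
          (Real.sqrt π * Real.Gamma ((d : ℝ) / 2 + 1 / 2)) := by
  have main := main_claim hd (by omega) (by omega)
  refine ⟨?_, main⟩
  have hfun : (fun x : Metric.sphere (0 : EuclideanSpace ℝ (Fin d)) 1 =>
      ⨆ (i : Fin d) (_ : (i : ℕ) < 2), |(x : EuclideanSpace ℝ (Fin d)) i|)
      = fun x : Metric.sphere (0 : EuclideanSpace ℝ (Fin d)) 1 =>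
        max |(x : EuclideanSpace ℝ (Fin d)) ⟨0, by omega⟩|
          |(x : EuclideanSpace ℝ (Fin d)) ⟨1, by omega⟩| :=
    funext fun x => isup_eq hd _
  rw [E_DS, hfun, div_mul_div_comm]
  exact main
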